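/- With c_i defined by the recursion c_i = b − (v·m_i + c_{i−h+1} + ... + c_{i−1}) and c_i = 0 for i < 0, a tiling with column projections (m_i) is separated between column i and column i+1 if and only if c_{i−h+2} + c_{i−h+3} + ... + c_i = 0. -/
import Mathlib


/-- A bar placement in the plane grid `ℕ × ℕ`: `(true, i, j)` is a vertical bar
anchored at `(i,j)` (its topmost cell), `(false, i, j)` a horizontal bar anchored at
`(i,j)` (its leftmost cell). -/
abbrev BarP := Bool × ℕ × ℕ

/-- The cells covered by a bar: a horizontal bar of length `h` at `(i,j)` covers
`(i,j),…,(i+h-1,j)`; a vertical bar of length `v` at `(i,j)` covers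
`(i,j),…,(i,j+v-1)`. -/
def barCells (h v : ℕ) (t : BarP) : Finset (ℕ × ℕ) :=
  if t.1 then (Finset.range v).image (fun s => (t.2.1, t.2.2 + s))
  else (Finset.range h).image (fun s => (t.2.1 + s, t.2.2))

/-- `T` is a tiling of the region `R` by horizontal bars of length `h` and vertical
bars of length `v`: all bars lie inside `R` and every cell of `R` is covered by
exactly one bar. -/
def IsTilingOf (h v : ℕ) (R : Finset (ℕ × ℕ)) (T : Finset BarP) : Prop :=
  (∀ t ∈ T, barCells h v t ⊆ R) ∧
  ∀ c ∈ R, ∃! t, t ∈ T ∧ c ∈ barCells h v t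

/-- Number of vertical bars of `T` lying in column `i`. -/
def vertCount (T : Finset BarP) (i : ℕ) : ℕ :=
  (T.filter (fun t => t.1 = true ∧ t.2.1 = i)).card

/-- Number of horizontal bars of `T` lying in row `j`. -/
def horizCount (T : Finset BarP) (j : ℕ) : ℕ :=
  (T.filter (fun t => t.1 = false ∧ t.2.2 = j)).card

/-- Number of horizontal bars of `T` whose leftmost cell is in column `i`. -/
def horizStartCount (T : Finset BarP) (i : ℕ) : ℕ :=
  (T.filter (fun t => t.1 = false ∧ t.2.1 = i)).card

/-- The rectangle `R_{a×b} = {0,…,a-1} × {0,…,b-1}`. -/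
def rectR (a b : ℕ) : Finset (ℕ × ℕ) := Finset.range a ×ˢ Finset.range b

/-- A tiling is separated between column `i` and column `i+1` if no horizontal bar
covers cells in both columns. -/
def SeparatedAt (h v : ℕ) (T : Finset BarP) (i : ℕ) : Prop :=
  ¬ ∃ t ∈ T, t.1 = false ∧
      (∃ j, (i, j) ∈ barCells h v t) ∧ (∃ j, (i + 1, j) ∈ barCells h v t)

open Finset

lemma mem_barCells_false {h v : ℕ} (x y i j : ℕ) :
    (i, j) ∈ barCells h v (false, x, y) ↔ x ≤ i ∧ i < x + h ∧ j = y := by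
  simp only [barCells, Bool.false_eq_true, if_false, mem_image, mem_range, Prod.mk.injEq]
  constructor
  · rintro ⟨s, hs, rfl, rfl⟩; omega
  · rintro ⟨h1, h2, rfl⟩; exact ⟨i - x, by omega, by omega, rfl⟩

lemma mem_barCells_true {h v : ℕ} (x y i j : ℕ) :
    (i, j) ∈ barCells h v (true, x, y) ↔ x = i ∧ y ≤ j ∧ j < y + v := by
  simp only [barCells, if_true, mem_image, mem_range, Prod.mk.injEq]
  constructor
  · rintro ⟨s, hs, rfl, rfl⟩; omega
  · rintro ⟨rfl, h1, h2⟩; exact ⟨j - y, by omega, rfl, by omega⟩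

/-- Column counting identity. -/
lemma colcount {a b h v : ℕ} (hh : 1 ≤ h) (T : Finset BarP)
    (hT : IsTilingOf h v (rectR a b) T) (i : ℕ) (hi : i < a) :
    b = vertCount T i * v +
      ∑ k ∈ Finset.range h, (if k ≤ i then horizStartCount T (i - k) else 0) := by
  classical
  set C : Finset (ℕ × ℕ) := ({i} : Finset ℕ) ×ˢ Finset.range b with hC
  have hCsub : C ⊆ rectR a b := by
    intro p hp
    simp only [hC, mem_product, mem_singleton, mem_range] at hp
    simp only [rectR, mem_product, mem_range]
    omega
  set f : ℕ × ℕ → BarP := fun cc =>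
    if hc : ∃ t, t ∈ T ∧ cc ∈ barCells h v t then hc.choose else (true, 0, 0) with hf
  have hfmem : ∀ cc ∈ C, f cc ∈ T ∧ cc ∈ barCells h v (f cc) := by
    intro cc hcc
    obtain ⟨t, ⟨ht, hct⟩, _⟩ := hT.2 cc (hCsub hcc)
    have hc : ∃ t, t ∈ T ∧ cc ∈ barCells h v t := ⟨t, ht, hct⟩
    simp only [hf, dif_pos hc]
    exact hc.choose_spec
  have hfu : ∀ cc ∈ C, ∀ t ∈ T, cc ∈ barCells h v t → f cc = t := by
    intro cc hcc t ht hct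
    obtain ⟨t', _, hu⟩ := hT.2 cc (hCsub hcc)
    have h1 := hu (f cc) ⟨(hfmem cc hcc).1, (hfmem cc hcc).2⟩
    have h2 := hu t ⟨ht, hct⟩
    rw [h1, h2]
  have hcard : C.card = ∑ t ∈ T, (C.filter (fun cc => f cc = t)).card :=
    card_eq_sum_card_fiberwise (fun cc hc => (hfmem cc hc).1)
  have hfib : ∀ t ∈ T, (C.filter fun cc => f cc = t) = C ∩ barCells h v t := by
    intro t ht
    ext cc
    simp only [mem_filter, mem_inter]
    constructor
    · rintro ⟨h1, rfl⟩; exact ⟨h1, (hfmem cc h1).2⟩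
    · rintro ⟨h1, h2⟩; exact ⟨h1, hfu cc h1 t ht h2⟩
  have hbar : ∀ t ∈ T, (C ∩ barCells h v t).card =
      (if t.1 = true ∧ t.2.1 = i then 1 else 0) * v +
      (if t.1 = false ∧ t.2.1 ≤ i ∧ i < t.2.1 + h then 1 else 0) := by
    rintro ⟨bt, x, y⟩ ht
    cases bt
    · -- horizontal
      simp only [Bool.false_eq_true, false_and, if_false, true_and, zero_mul, zero_add]
      have hyb : y < b := by
        have := hT.1 _ ht ((mem_barCells_false x y x y).mpr ⟨le_refl x, by omega, rfl⟩)
        simp only [rectR, mem_product, mem_range] at this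
        exact this.2
      by_cases hxi : x ≤ i ∧ i < x + h
      · rw [if_pos hxi]
        have : C ∩ barCells h v (false, x, y) = {(i, y)} := by
          ext ⟨p, q⟩
          simp only [mem_inter, hC, mem_product, mem_singleton, mem_range,
            mem_barCells_false, Prod.mk.injEq]
          constructor
          · rintro ⟨⟨rfl, _⟩, _, _, rfl⟩; exact ⟨rfl, rfl⟩
          · rintro ⟨rfl, rfl⟩; exact ⟨⟨rfl, hyb⟩, hxi.1, hxi.2, rfl⟩
        rw [this, card_singleton]
      · rw [if_neg hxi]
        have : C ∩ barCells h v (false, x, y) = ∅ := by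
          ext ⟨p, q⟩
          simp only [mem_inter, hC, mem_product, mem_singleton, mem_range,
            mem_barCells_false, notMem_empty, iff_false, not_and]
          rintro ⟨rfl, _⟩ h1 h2 _
          exact hxi ⟨h1, h2⟩
        rw [this, card_empty]
    · -- vertical
      simp only [true_and, Bool.true_eq_false, false_and, if_false, add_zero]
      by_cases hxi : x = i
      · subst hxi
        rw [if_pos rfl, one_mul]
        have hsub : barCells h v (true, x, y) ⊆ C := by
          intro p hp
          obtain ⟨p1, p2⟩ := p
          rw [mem_barCells_true] at hp
          have := hT.1 _ ht ((mem_barCells_true (h := h) (v := v) x y p1 p2).mpr hp)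
          simp only [rectR, mem_product, mem_range] at this
          simp only [hC, mem_product, mem_singleton, mem_range]
          exact ⟨hp.1.symm, this.2⟩
        rw [inter_eq_right.mpr hsub]
        unfold barCells
        simp only [if_true]
        rw [card_image_of_injective _ (fun s1 s2 hs => by
          simpa using hs)]
        exact card_range v
      · rw [if_neg hxi, zero_mul]
        have : C ∩ barCells h v (true, x, y) = ∅ := by
          ext ⟨p, q⟩
          simp only [mem_inter, hC, mem_product, mem_singleton, mem_range,
            mem_barCells_true, notMem_empty, iff_false, not_and]
          rintro ⟨rfl, _⟩ h1
          exact absurd h1 hxi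
        rw [this, card_empty]
  have hCcard : C.card = b := by
    simp [hC]
  -- total
  have htot : b = vertCount T i * v +
      (T.filter (fun t => t.1 = false ∧ t.2.1 ≤ i ∧ i < t.2.1 + h)).card := by
    rw [← hCcard, hcard, sum_congr rfl (fun t ht => by rw [hfib t ht, hbar t ht]),
      sum_add_distrib, ← sum_mul]
    congr 1
    · congr 1
      rw [vertCount, card_filter]
    · rw [card_filter]
  rw [htot]
  congr 1
  -- now fiberwise over k = i - x
  set H := T.filter (fun t => t.1 = false ∧ t.2.1 ≤ i ∧ i < t.2.1 + h) with hH
  have hmap : ∀ t ∈ H, i - t.2.1 ∈ Finset.range h := by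
    intro t ht
    simp only [hH, mem_filter] at ht
    rw [mem_range]
    omega
  have := card_eq_sum_card_fiberwise hmap
  rw [this]
  refine sum_congr rfl (fun k hk => ?_)
  rw [mem_range] at hk
  by_cases hki : k ≤ i
  · rw [if_pos hki]
    have : (H.filter fun t => i - t.2.1 = k) =
        T.filter (fun t => t.1 = false ∧ t.2.1 = i - k) := by
      ext t
      simp only [hH, mem_filter, and_assoc]
      constructor
      · rintro ⟨h1, h2, h3, h4, h5⟩; exact ⟨h1, h2, by omega⟩
      · rintro ⟨h1, h2, h3⟩; exact ⟨h1, h2, by omega, by omega, by omega⟩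
    rw [this, horizStartCount]
  · rw [if_neg hki]
    have : (H.filter fun t => i - t.2.1 = k) = ∅ := by
      ext t
      simp only [hH, mem_filter, notMem_empty, iff_false, not_and, and_imp]
      intro _ _ h2 _
      omega
    rw [this, card_empty]


/-- Number of horizontal bars starting in column `z`, as a function on `ℤ`. -/
noncomputable def Sfun (T : Finset BarP) (z : ℤ) : ℤ :=
  if 0 ≤ z then (horizStartCount T z.toNat : ℤ) else 0

lemma Sfun_neg (T : Finset BarP) {z : ℤ} (hz : z < 0) : Sfun T z = 0 := by
  simp [Sfun, not_le.mpr hz]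

lemma Sfun_nonneg (T : Finset BarP) (z : ℤ) : 0 ≤ Sfun T z := by
  unfold Sfun; split <;> positivity

lemma Sfun_sub {i k : ℕ} (T : Finset BarP) (hk : k ≤ i) :
    Sfun T ((i : ℤ) - (k : ℤ)) = (horizStartCount T (i - k) : ℤ) := by
  have h0 : (0:ℤ) ≤ (i:ℤ) - k := by omega
  have h1 : ((i:ℤ) - (k:ℤ)).toNat = i - k := by omega
  rw [Sfun, if_pos h0, h1]

lemma c_eq_S {a b h v : ℕ} (hh : 1 ≤ h) (m : ℕ → ℕ) (c : ℤ → ℤ)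
    (hcneg : ∀ z : ℤ, z < 0 → c z = 0)
    (hcrec : ∀ i : ℕ, i < a →
      c (i : ℤ) = (b : ℤ) - ((v : ℤ) * (m i : ℤ) +
        ∑ k ∈ Finset.Ico 1 h, c ((i : ℤ) - (k : ℤ))))
    (T : Finset BarP) (hT : IsTilingOf h v (rectR a b) T)
    (hm : ∀ i < a, vertCount T i = m i) :
    ∀ n : ℕ, n < a → c (n : ℤ) = Sfun T (n : ℤ) := by
  intro n
  induction n using Nat.strong_induction_on with
  | _ n ih =>
    intro hn
    rw [hcrec n hn]
    have hIco : ∀ k ∈ Finset.Ico 1 h, c ((n:ℤ) - k) = Sfun T ((n:ℤ) - k) := by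
      intro k hk
      rw [mem_Ico] at hk
      rcases le_or_gt k n with hkn | hkn
      · have hcast : (n:ℤ) - k = ((n - k : ℕ) : ℤ) := by omega
        rw [hcast]
        exact ih (n - k) (by omega) (by omega)
      · rw [hcneg _ (by omega), Sfun_neg T (by omega)]
    rw [sum_congr rfl hIco]
    have hcol := colcount hh T hT n hn
    have hcolZ : (b : ℤ) = (v : ℤ) * (m n : ℤ) +
        ∑ k ∈ Finset.range h, Sfun T ((n:ℤ) - k) := by
      have hterm : ∀ k ∈ Finset.range h,
          ((if k ≤ n then horizStartCount T (n - k) else 0 : ℕ) : ℤ)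
            = Sfun T ((n:ℤ) - k) := by
        intro k _
        by_cases hkn : k ≤ n
        · rw [if_pos hkn, Sfun_sub T hkn]
        · rw [if_neg hkn, Sfun_neg T (by omega), Nat.cast_zero]
      calc (b : ℤ) = ((vertCount T n * v : ℕ) : ℤ) +
            ∑ k ∈ Finset.range h,
              ((if k ≤ n then horizStartCount T (n - k) else 0 : ℕ) : ℤ) := by
              rw [← Nat.cast_sum, ← Nat.cast_add, ← hcol]
        _ = (v : ℤ) * (m n : ℤ) + ∑ k ∈ Finset.range h, Sfun T ((n:ℤ) - k) := by
              rw [sum_congr rfl hterm, hm n hn]; push_cast; ring_nf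
    have hsplit : ∑ k ∈ Finset.range h, Sfun T ((n:ℤ) - k)
        = Sfun T (n : ℤ) + ∑ k ∈ Finset.Ico 1 h, Sfun T ((n:ℤ) - k) := by
      rw [range_eq_Ico, sum_eq_sum_Ico_succ_bot hh]
      simp
    rw [hsplit] at hcolZ
    linarith
/-- With `c` defined by `c z = 0` for `z < 0` and the recursion
`c i = b - (v·m i + c (i-h+1) + … + c (i-1))`, a tiling of `R_{a×b}` with column
projections `(m_i)` is separated between column `i` and column `i+1` if and only if
`c (i-h+2) + c (i-h+3) + … + c i = 0`. -/
theorem stmt_15 (a b h v : ℕ) (ha : 1 ≤ a) (hb : 1 ≤ b) (hh : 1 ≤ h) (hv : 1 ≤ v)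
    (m : ℕ → ℕ) (c : ℤ → ℤ)
    (hcneg : ∀ z : ℤ, z < 0 → c z = 0)
    (hcrec : ∀ i : ℕ, i < a →
      c (i : ℤ) = (b : ℤ) - ((v : ℤ) * (m i : ℤ) +
        ∑ k ∈ Finset.Ico 1 h, c ((i : ℤ) - (k : ℤ))))
    (T : Finset BarP) (hT : IsTilingOf h v (rectR a b) T)
    (hm : ∀ i < a, vertCount T i = m i) :
    ∀ i : ℕ, i + 1 < a →
      (SeparatedAt h v T i ↔ ∑ k ∈ Finset.range (h - 1), c ((i : ℤ) - (k : ℤ)) = 0) := by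
  intro i hia
  have hcS := c_eq_S hh m c hcneg hcrec T hT hm
  have hterm : ∀ k ∈ Finset.range (h - 1), c ((i:ℤ) - k) = Sfun T ((i:ℤ) - k) := by
    intro k _
    rcases le_or_gt k i with hki | hki
    · have hcast : (i:ℤ) - k = ((i - k : ℕ) : ℤ) := by omega
      rw [hcast]
      exact hcS (i - k) (by omega)
    · rw [hcneg _ (by omega), Sfun_neg T (by omega)]
  rw [sum_congr rfl hterm]
  have hiff := sum_eq_zero_iff_of_nonneg
    (s := Finset.range (h - 1)) (f := fun k : ℕ => Sfun T ((i:ℤ) - (k:ℤ)))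
    (fun k _ => Sfun_nonneg T ((i:ℤ) - k))
  rw [hiff]
  unfold SeparatedAt
  constructor
  · intro hsep k hk
    show Sfun T ((i:ℤ) - (k:ℤ)) = 0
    rw [mem_range] at hk
    rcases le_or_gt k i with hki | hki
    · rw [Sfun_sub T hki, Nat.cast_eq_zero, horizStartCount, card_eq_zero,
        filter_eq_empty_iff]
      rintro t ht ⟨hbt, hxt⟩
      obtain ⟨bt, x, y⟩ := t
      simp only at hbt hxt
      subst hbt hxt
      exact hsep ⟨(false, i - k, y), ht, rfl,
        ⟨y, (mem_barCells_false _ _ _ _).mpr ⟨by omega, by omega, rfl⟩⟩,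
        ⟨y, (mem_barCells_false _ _ _ _).mpr ⟨by omega, by omega, rfl⟩⟩⟩
    · exact Sfun_neg T (by omega)
  · rintro hall ⟨⟨bt, x, y⟩, ht, hbt, ⟨j1, hj1⟩, ⟨j2, hj2⟩⟩
    simp only at hbt
    subst hbt
    rw [mem_barCells_false] at hj1 hj2
    obtain ⟨hx1, hx2, rfl⟩ := hj1
    obtain ⟨hx3, hx4, -⟩ := hj2
    have hk : i - x < h - 1 := by omega
    have h0 : Sfun T ((i:ℤ) - ((i - x : ℕ):ℤ)) = 0 := hall (i - x) (mem_range.mpr hk)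
    rw [Sfun_sub T (by omega), Nat.cast_eq_zero, horizStartCount, card_eq_zero,
      filter_eq_empty_iff] at h0
    exact h0 ht ⟨rfl, show x = i - (i - x) by omega⟩
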